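/- arXiv:2405.06952 — 8 statements merged into one kernel-verified Lean document; each statement's English description precedes it below -/
import Mathlib

section
/- Let Z_u = {y ∈ ℝ^d : Σ_{j=1}^n g_j(y − x_j) ≥ u} be the excursion set at level u. Then Z_u ∩ W = ⋃_{∅ ≠ I ⊆ {1,…,n}} X_I, where X_I = {y ∈ W : Σ_{j∈I} g_j(y − x_j) ≥ u and y − x_j ∈ K_j for all j ∈ I}. In particular, Z_u ∩ W is a finite union of compact convex sets. -/
/-- `Z_u ∩ W = ⋃_{∅ ≠ I ⊆ {1,…,n}} X_I`, and in particular `Z_u ∩ W`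
is a finite union of compact convex sets (each `X_I` is compact and convex). -/
theorem stmt2 (d : ℕ) (hd : 1 ≤ d) (n : ℕ) (hn : 1 ≤ n) (u : ℝ) (hu : 0 < u)
    (g : Fin n → EuclideanSpace ℝ (Fin d) → ℝ)
    (K : Fin n → Set (EuclideanSpace ℝ (Fin d)))
    (hKne : ∀ j, (K j).Nonempty)
    (hKcpt : ∀ j, IsCompact (K j))
    (hKconv : ∀ j, Convex ℝ (K j))
    (hg0 : ∀ j z, 0 ≤ g j z)
    (hgsupp : ∀ j, ∀ z ∉ K j, g j z = 0)
    (hgconc : ∀ j, ConcaveOn ℝ (K j) (g j))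
    (hgcont : ∀ j, ContinuousOn (g j) (K j))
    (x : Fin n → EuclideanSpace ℝ (Fin d))
    (W : Set (EuclideanSpace ℝ (Fin d))) (hWcpt : IsCompact W) (hWconv : Convex ℝ W) :
    ({y : EuclideanSpace ℝ (Fin d) | u ≤ ∑ j : Fin n, g j (y - x j)} ∩ W =
      ⋃ (I : Finset (Fin n)) (_ : I.Nonempty),
        {y : EuclideanSpace ℝ (Fin d) |
          y ∈ W ∧ u ≤ ∑ j ∈ I, g j (y - x j) ∧ ∀ j ∈ I, y - x j ∈ K j}) ∧
    ∀ I : Finset (Fin n), I.Nonempty →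
      IsCompact {y : EuclideanSpace ℝ (Fin d) |
          y ∈ W ∧ u ≤ ∑ j ∈ I, g j (y - x j) ∧ ∀ j ∈ I, y - x j ∈ K j} ∧
      Convex ℝ {y : EuclideanSpace ℝ (Fin d) |
          y ∈ W ∧ u ≤ ∑ j ∈ I, g j (y - x j) ∧ ∀ j ∈ I, y - x j ∈ K j} := by
  classical
  constructor
  · ext y
    simp only [Set.mem_inter_iff, Set.mem_setOf_eq, Set.mem_iUnion]
    constructor
    · rintro ⟨hu', hW⟩
      refine ⟨Finset.univ.filter fun j => y - x j ∈ K j, ?_, hW, ?_, ?_⟩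
      · rw [Finset.filter_nonempty_iff]
        by_contra h
        push_neg at h
        have hz : ∑ j : Fin n, g j (y - x j) = 0 :=
          Finset.sum_eq_zero fun j hj => hgsupp j _ (h j hj)
        linarith
      · calc u ≤ ∑ j : Fin n, g j (y - x j) := hu'
          _ = ∑ j : Fin n, if y - x j ∈ K j then g j (y - x j) else 0 := by
              refine Finset.sum_congr rfl fun j _ => ?_
              split
              · rfl
              · exact hgsupp j _ (by assumption)
          _ = ∑ j ∈ Finset.univ.filter fun j => y - x j ∈ K j, g j (y - x j) :=
              (Finset.sum_filter _ _).symm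
      · intro j hj
        exact (Finset.mem_filter.mp hj).2
    · rintro ⟨I, hI, hW, hsum, hK⟩
      refine ⟨le_trans hsum ?_, hW⟩
      exact Finset.sum_le_sum_of_subset_of_nonneg (Finset.subset_univ I)
        (fun j _ _ => hg0 j _)
  · intro I hI
    have hcomb : ∀ (y z : EuclideanSpace ℝ (Fin d)) (a b : ℝ) (j : Fin n),
        (a • y + b • z) - x j = (a + b) • x j - x j + (a • (y - x j) + b • (z - x j)) := by
      intro y z a b j
      module
    constructor
    · -- compact
      set C : Set (EuclideanSpace ℝ (Fin d)) := ⋂ j ∈ I, {y | y - x j ∈ K j} with hCdef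
      have hC : IsClosed C := by
        refine isClosed_biInter fun j _ => ?_
        exact (hKcpt j).isClosed.preimage (continuous_id.sub continuous_const)
      have hf : ContinuousOn (fun y => ∑ j ∈ I, g j (y - x j)) C := by
        refine continuousOn_finset_sum _ fun j hj => ?_
        have h1 : ContinuousOn (fun y => g j (y - x j)) {y | y - x j ∈ K j} :=
          (hgcont j).comp (continuous_id.sub continuous_const).continuousOn
            (fun y hy => hy)
        exact h1.mono (Set.biInter_subset_of_mem hj)
      have hclosed : IsClosed (C ∩ (fun y => ∑ j ∈ I, g j (y - x j)) ⁻¹' Set.Ici u) :=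
        hf.preimage_isClosed_of_isClosed hC isClosed_Ici
      have heq : {y : EuclideanSpace ℝ (Fin d) |
          y ∈ W ∧ u ≤ ∑ j ∈ I, g j (y - x j) ∧ ∀ j ∈ I, y - x j ∈ K j} =
          W ∩ (C ∩ (fun y => ∑ j ∈ I, g j (y - x j)) ⁻¹' Set.Ici u) := by
        ext y
        simp only [Set.mem_inter_iff, Set.mem_setOf_eq, Set.mem_preimage, Set.mem_Ici,
          hCdef, Set.mem_iInter]
        tauto
      rw [heq]
      exact hWcpt.inter_right hclosed
    · rintro y ⟨hyW, hysum, hyK⟩ z ⟨hzW, hzsum, hzK⟩ a b ha hb hab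
      have hpt : ∀ j ∈ I, (a • y + b • z) - x j = a • (y - x j) + b • (z - x j) := by
        intro j _
        have := hcomb y z a b j
        rw [hab, one_smul] at this
        simpa using this
      refine ⟨hWconv hyW hzW ha hb hab, ?_, ?_⟩
      · have key : ∀ j ∈ I, a * g j (y - x j) + b * g j (z - x j)
            ≤ g j ((a • y + b • z) - x j) := by
          intro j hj
          rw [hpt j hj]
          exact (hgconc j).2 (hyK j hj) (hzK j hj) ha hb hab
        calc u = a * u + b * u := by rw [← add_mul, hab, one_mul]
          _ ≤ a * ∑ j ∈ I, g j (y - x j) + b * ∑ j ∈ I, g j (z - x j) := by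
              gcongr
          _ = ∑ j ∈ I, (a * g j (y - x j) + b * g j (z - x j)) := by
              rw [Finset.sum_add_distrib, Finset.mul_sum, Finset.mul_sum]
          _ ≤ ∑ j ∈ I, g j ((a • y + b • z) - x j) := Finset.sum_le_sum key
      · intro j hj
        rw [hpt j hj]
        exact (hKconv j) (hyK j hj) (hzK j hj) ha hb hab
end

section
/- Let Q ⊆ ℝ^d be any set, and define J = {j ∈ {1,…,n} : (K_j + x_j) ∩ Q ∉ {∅, Q}} and M = {j ∈ {1,…,n} : Q ⊆ K_j + x_j}. Then Z_u ∩ Q = ⋃ {X_{I ∪ M} ∩ Q : I ⊆ J and I ∪ M ≠ ∅}, where Z_u = {y ∈ ℝ^d : Σ_{j=1}^n g_j(y − x_j) ≥ u} and X_I = {y ∈ ℝ^d : Σ_{j∈I} g_j(y − x_j) ≥ u and y − x_j ∈ K_j for all j ∈ I} for nonempty I ⊆ {1,…,n}. -/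
/-- for any set `Q`, with `J = {j : (K_j+x_j) ∩ Q ∉ {∅, Q}}` and
`M = {j : Q ⊆ K_j + x_j}`, one has
`Z_u ∩ Q = ⋃ {X_{I∪M} ∩ Q : I ⊆ J, I ∪ M ≠ ∅}`. -/
theorem stmt4 (d : ℕ) (hd : 1 ≤ d) (n : ℕ) (hn : 1 ≤ n) (u : ℝ) (hu : 0 < u)
    (g : Fin n → EuclideanSpace ℝ (Fin d) → ℝ)
    (K : Fin n → Set (EuclideanSpace ℝ (Fin d)))
    (hKne : ∀ j, (K j).Nonempty)
    (hKcpt : ∀ j, IsCompact (K j))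
    (hKconv : ∀ j, Convex ℝ (K j))
    (hg0 : ∀ j z, 0 ≤ g j z)
    (hgsupp : ∀ j, ∀ z ∉ K j, g j z = 0)
    (hgconc : ∀ j, ConcaveOn ℝ (K j) (g j))
    (hgcont : ∀ j, ContinuousOn (g j) (K j))
    (x : Fin n → EuclideanSpace ℝ (Fin d))
    (Q : Set (EuclideanSpace ℝ (Fin d)))
    (J M : Finset (Fin n))
    (hJ : ∀ j, j ∈ J ↔
      (((· + x j) '' K j) ∩ Q ≠ ∅ ∧ ((· + x j) '' K j) ∩ Q ≠ Q))
    (hM : ∀ j, j ∈ M ↔ Q ⊆ (· + x j) '' K j) :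
    {y : EuclideanSpace ℝ (Fin d) | u ≤ ∑ j : Fin n, g j (y - x j)} ∩ Q =
      ⋃ (I : Finset (Fin n)) (_ : I ⊆ J ∧ (I ∪ M).Nonempty),
        ({y : EuclideanSpace ℝ (Fin d) |
            u ≤ ∑ j ∈ I ∪ M, g j (y - x j) ∧ ∀ j ∈ I ∪ M, y - x j ∈ K j} ∩ Q) := by
  classical
  have hmem : ∀ (j : Fin n) (y : EuclideanSpace ℝ (Fin d)),
      y ∈ (· + x j) '' K j ↔ y - x j ∈ K j := by
    intro j y
    constructor
    · rintro ⟨a, ha, rfl⟩; simpa using ha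
    · intro h; exact ⟨y - x j, h, by simp⟩
  ext y
  simp only [Set.mem_inter_iff, Set.mem_setOf_eq, Set.mem_iUnion]
  constructor
  · rintro ⟨hy, hyQ⟩
    set I : Finset (Fin n) := J.filter (fun j => y - x j ∈ K j) with hI
    have hIM : ∀ j ∈ I ∪ M, y - x j ∈ K j := by
      intro j hj
      rcases Finset.mem_union.1 hj with hj | hj
      · exact (Finset.mem_filter.1 hj).2
      · exact (hmem j y).1 ((hM j).1 hj hyQ)
    have hzero : ∀ j ∈ Finset.univ, j ∉ I ∪ M → g j (y - x j) = 0 := by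
      intro j _ hj
      by_cases hk : y - x j ∈ K j
      · exfalso
        have hyK : y ∈ (· + x j) '' K j := (hmem j y).2 hk
        have hjM : j ∉ M := fun h => hj (Finset.mem_union_right _ h)
        have hne : ((· + x j) '' K j) ∩ Q ≠ ∅ := by
          intro h
          have : y ∈ (∅ : Set (EuclideanSpace ℝ (Fin d))) := h ▸ ⟨hyK, hyQ⟩
          exact this
        have hneQ : ((· + x j) '' K j) ∩ Q ≠ Q := by
          intro h
          refine hjM ((hM j).2 (fun z hz => ?_)); rw [← h] at hz; exact hz.1
        have hjJ : j ∈ J := (hJ j).2 ⟨hne, hneQ⟩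
        exact hj (Finset.mem_union_left _ (Finset.mem_filter.2 ⟨hjJ, hk⟩))
      · exact hgsupp j _ hk
    have hsum : ∑ j ∈ I ∪ M, g j (y - x j) = ∑ j : Fin n, g j (y - x j) :=
      Finset.sum_subset (Finset.subset_univ _) hzero
    have husum : u ≤ ∑ j ∈ I ∪ M, g j (y - x j) := hsum ▸ hy
    have hne : (I ∪ M).Nonempty := by
      rcases Finset.eq_empty_or_nonempty (I ∪ M) with h | h
      · exfalso; rw [h, Finset.sum_empty] at husum; linarith
      · exact h
    exact ⟨I, ⟨Finset.filter_subset _ _, hne⟩, ⟨husum, hIM⟩, hyQ⟩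
  · rintro ⟨I, ⟨hIJ, hne⟩, ⟨hsum, _⟩, hyQ⟩
    refine ⟨le_trans hsum ?_, hyQ⟩
    exact Finset.sum_le_sum_of_subset_of_nonneg (Finset.subset_univ _)
      (fun j _ _ => hg0 j _)
end

section
/- For every integer k ≥ 1 and every real α ≥ 0 there exists a constant c = c(α, k) > 0 with the following property: for every sequence (a_m)_{m≥1} of nonnegative real numbers such that Σ_{m=1}^∞ a_m < ∞, Σ_{m=1}^∞ m(m−1)⋯(m−k+1) a_m < ∞, and Σ_{m=1}^∞ m(m−1)⋯(m−k+1)(m−k) a_m ≤ α · Σ_{m=1}^∞ m(m−1)⋯(m−k+1) a_m, one has Σ_{m=1}^∞ m(m−1)⋯(m−k+1) a_m ≤ c · Σ_{m=1}^∞ a_m. (Here m(m−1)⋯(m−k+1) = Π_{i=0}^{k−1}(m−i) is the descending factorial; note that all summands appearing above are nonnegative for m ≥ 1.) -/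
/-- Fock-space (sequence) form of the generalised reverse Poincaré
inequality. For every `k ≥ 1` and `α ≥ 0` there is a constant `c = c(α,k) > 0` such
that for every nonnegative sequence `(a_m)_{m ≥ 1}` with
`Σ a_m < ∞`, `Σ m(m−1)⋯(m−k+1) a_m < ∞`, `Σ m(m−1)⋯(m−k) a_m < ∞` and
`Σ m(m−1)⋯(m−k) a_m ≤ α Σ m(m−1)⋯(m−k+1) a_m`, one has
`Σ m(m−1)⋯(m−k+1) a_m ≤ c Σ a_m`. -/
theorem stmt5 (k : ℕ) (hk : 1 ≤ k) (α : ℝ) (hα : 0 ≤ α) :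
    ∃ c : ℝ, 0 < c ∧ ∀ a : ℕ → ℝ,
      (∀ m : ℕ, 0 ≤ a (m + 1)) →
      Summable (fun m : ℕ => a (m + 1)) →
      Summable (fun m : ℕ => (∏ i ∈ Finset.range k, ((m : ℝ) + 1 - i)) * a (m + 1)) →
      Summable (fun m : ℕ =>
        (∏ i ∈ Finset.range (k + 1), ((m : ℝ) + 1 - i)) * a (m + 1)) →
      ((∑' m : ℕ, (∏ i ∈ Finset.range (k + 1), ((m : ℝ) + 1 - i)) * a (m + 1)) ≤
        α * ∑' m : ℕ, (∏ i ∈ Finset.range k, ((m : ℝ) + 1 - i)) * a (m + 1)) →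
      (∑' m : ℕ, (∏ i ∈ Finset.range k, ((m : ℝ) + 1 - i)) * a (m + 1)) ≤
        c * ∑' m : ℕ, a (m + 1) := by
  classical
  set Nn : ℕ := ⌈2 * α⌉₊ + 2 * k + 1 with hNn
  set N : ℝ := (Nn : ℝ) with hNdef
  have hN0 : 0 < N := by positivity
  have hNbig : 2 * α + 2 * k ≤ N := by
    have h1 : 2 * α ≤ (⌈2 * α⌉₊ : ℝ) := Nat.le_ceil _
    have : N = (⌈2 * α⌉₊ : ℝ) + 2 * k + 1 := by
      rw [hNdef, hNn]; push_cast; ring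
    rw [this]; linarith
  refine ⟨2 * N ^ k, by positivity, ?_⟩
  intro a ha hsa hsb hsc hle
  set b : ℕ → ℝ := fun m => (∏ i ∈ Finset.range k, ((m : ℝ) + 1 - i)) * a (m + 1) with hb
  have hbnn : ∀ m, 0 ≤ b m := by
    intro m
    by_cases hmk : m + 1 < k
    · have : (∏ i ∈ Finset.range k, ((m : ℝ) + 1 - i)) = 0 := by
        apply Finset.prod_eq_zero (Finset.mem_range.mpr hmk)
        push_cast; ring
      simp [hb, this]
    · push_neg at hmk
      apply mul_nonneg _ (ha m)
      apply Finset.prod_nonneg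
      intro i hi
      have hi' : i < k := Finset.mem_range.mp hi
      have : (i : ℝ) ≤ m := by
        have : i + 1 ≤ m + 1 := le_trans hi' hmk
        exact_mod_cast Nat.lt_succ_iff.mp (Nat.lt_succ_of_le (Nat.lt_succ_iff.mp this))
      linarith
  have hsplit : ∀ m : ℕ, (∏ i ∈ Finset.range (k + 1), ((m : ℝ) + 1 - i)) * a (m + 1)
      = ((m : ℝ) + 1 - k) * b m := by
    intro m
    rw [Finset.prod_range_succ, hb]
    ring
  have hsc' : Summable (fun m : ℕ => ((m : ℝ) + 1 - k) * b m) := hsc.congr hsplit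
  have hsum_mb : Summable (fun m : ℕ => ((m : ℝ) + 1) * b m) := by
    have : (fun m : ℕ => ((m : ℝ) + 1) * b m)
        = fun m : ℕ => ((m : ℝ) + 1 - k) * b m + (k : ℝ) * b m := by
      funext m; ring
    rw [this]
    exact hsc'.add (hsb.mul_left _)
  have hS0 : 0 ≤ ∑' m : ℕ, b m := tsum_nonneg hbnn
  have hmb : (∑' m : ℕ, ((m : ℝ) + 1) * b m) ≤ (α + k) * ∑' m : ℕ, b m := by
    have h1 : (∑' m : ℕ, ((m : ℝ) + 1) * b m)
        = (∑' m : ℕ, ((m : ℝ) + 1 - k) * b m) + (k : ℝ) * ∑' m : ℕ, b m := by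
      rw [← tsum_mul_left, ← Summable.tsum_add hsc' (hsb.mul_left _)]
      exact tsum_congr fun m => by ring
    have h2 : (∑' m : ℕ, ((m : ℝ) + 1 - k) * b m) ≤ α * ∑' m : ℕ, b m := by
      calc (∑' m : ℕ, ((m : ℝ) + 1 - k) * b m)
          = ∑' m : ℕ, (∏ i ∈ Finset.range (k + 1), ((m : ℝ) + 1 - i)) * a (m + 1) :=
            (tsum_congr hsplit).symm
        _ ≤ α * ∑' m : ℕ, b m := hle
    rw [h1]; linarith
  -- pointwise bound
  have hpt : ∀ m : ℕ, b m ≤ N ^ k * a (m + 1) + (1 / N) * (((m : ℝ) + 1) * b m) := by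
    intro m
    by_cases h : (m : ℝ) + 1 ≤ N
    · have hprod : (∏ i ∈ Finset.range k, ((m : ℝ) + 1 - i)) ≤ N ^ k := by
        by_cases hmk : m + 1 < k
        · have : (∏ i ∈ Finset.range k, ((m : ℝ) + 1 - i)) = 0 := by
            apply Finset.prod_eq_zero (Finset.mem_range.mpr hmk)
            push_cast; ring
          rw [this]; positivity
        · push_neg at hmk
          calc (∏ i ∈ Finset.range k, ((m : ℝ) + 1 - i))
              ≤ ∏ _i ∈ Finset.range k, N := by
                apply Finset.prod_le_prod
                · intro i hi
                  have hi' : i < k := Finset.mem_range.mp hi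
                  have : (i : ℝ) ≤ m := by
                    have h2 : i + 1 ≤ m + 1 := le_trans hi' hmk
                    exact_mod_cast Nat.succ_le_succ_iff.mp h2
                  linarith
                · intro i hi
                  have : (0 : ℝ) ≤ i := by positivity
                  linarith
            _ = N ^ k := by rw [Finset.prod_const, Finset.card_range]
      have h1 : b m ≤ N ^ k * a (m + 1) :=
        mul_le_mul_of_nonneg_right hprod (ha m)
      have h2 : 0 ≤ (1 / N) * (((m : ℝ) + 1) * b m) := by
        have := hbnn m
        have hm1 : (0 : ℝ) ≤ (m : ℝ) + 1 := by positivity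
        positivity
      linarith
    · push_neg at h
      have h1 : (1 : ℝ) ≤ ((m : ℝ) + 1) / N := (one_le_div hN0).mpr h.le
      have h2 : b m ≤ (((m : ℝ) + 1) / N) * b m := by
        nth_rewrite 1 [← one_mul (b m)]
        exact mul_le_mul_of_nonneg_right h1 (hbnn m)
      have h3 : (((m : ℝ) + 1) / N) * b m = (1 / N) * (((m : ℝ) + 1) * b m) := by ring
      have h4 : 0 ≤ N ^ k * a (m + 1) := by
        have := ha m; positivity
      linarith
  have hsumRHS : Summable (fun m : ℕ =>
      N ^ k * a (m + 1) + (1 / N) * (((m : ℝ) + 1) * b m)) :=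
    (hsa.mul_left _).add (hsum_mb.mul_left _)
  have hmain : (∑' m : ℕ, b m)
      ≤ N ^ k * (∑' m : ℕ, a (m + 1)) + (1 / N) * ∑' m : ℕ, ((m : ℝ) + 1) * b m := by
    calc (∑' m : ℕ, b m)
        ≤ ∑' m : ℕ, (N ^ k * a (m + 1) + (1 / N) * (((m : ℝ) + 1) * b m)) :=
          Summable.tsum_le_tsum hpt hsb hsumRHS
      _ = N ^ k * (∑' m : ℕ, a (m + 1)) + (1 / N) * ∑' m : ℕ, ((m : ℝ) + 1) * b m := by
          rw [Summable.tsum_add (hsa.mul_left _) (hsum_mb.mul_left _), tsum_mul_left, tsum_mul_left]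
  have hcoef : (α + k) / N ≤ 1 / 2 := by
    rw [div_le_div_iff₀ hN0 two_pos]
    have hk' : (1 : ℝ) ≤ (k : ℝ) := by exact_mod_cast hk
    linarith
  have hhalf : (1 / N) * ((α + k) * ∑' m : ℕ, b m) ≤ (1 / 2) * ∑' m : ℕ, b m := by
    have : (1 / N) * ((α + k) * ∑' m : ℕ, b m) = ((α + k) / N) * ∑' m : ℕ, b m := by ring
    rw [this]
    exact mul_le_mul_of_nonneg_right hcoef hS0
  have h5 : (1 / N) * (∑' m : ℕ, ((m : ℝ) + 1) * b m)
      ≤ (1 / N) * ((α + k) * ∑' m : ℕ, b m) :=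
    mul_le_mul_of_nonneg_left hmb (by positivity)
  have ha0 : 0 ≤ ∑' m : ℕ, a (m + 1) := tsum_nonneg ha
  linarith [hmain, h5, hhalf]
end

section
/- Define h : (ℝ^d)^{k−1} → [0,∞) by h(x) = sup_{y ∈ ℝ^d} f_x(y). Then h is continuous at every point x = (x_1,…,x_{k−1}) ∈ (ℝ^d)^{k−1} for which the set K(x) has nonempty interior. -/
/-- The shot noise function `f_x(y) = Σ_{i=1}^{k−1} g_i(y − x_i) + g_k(y − x_k)`,
where `k = m + 1`, the first `k − 1 = m` kernels are indexed by `Fin m` (via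
`Fin.castSucc`) and the last kernel is `g (Fin.last m)` with fixed shift `xk`. -/
noncomputable def fval (d m : ℕ) (g : Fin (m + 1) → EuclideanSpace ℝ (Fin d) → ℝ)
    (xk : EuclideanSpace ℝ (Fin d)) (v : Fin m → EuclideanSpace ℝ (Fin d))
    (y : EuclideanSpace ℝ (Fin d)) : ℝ :=
  (∑ i : Fin m, g i.castSucc (y - v i)) + g (Fin.last m) (y - xk)

/-- `K(x) = (⋂_{i=1}^{k−1} (K_i + x_i)) ∩ (K_k + x_k)`. -/
def Kx (d m : ℕ) (K : Fin (m + 1) → Set (EuclideanSpace ℝ (Fin d)))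
    (xk : EuclideanSpace ℝ (Fin d)) (v : Fin m → EuclideanSpace ℝ (Fin d)) :
    Set (EuclideanSpace ℝ (Fin d)) :=
  (⋂ i : Fin m, (· + v i) '' K i.castSucc) ∩ ((· + xk) '' K (Fin.last m))

open Filter Topology Metric Set

section auxlem
variable {E : Type*} [TopologicalSpace E]

lemma kernel_bdd {K : Set E} (hK : IsCompact K) {g : E → ℝ}
    (hg0 : ∀ z, 0 ≤ g z) (hsupp : ∀ z ∉ K, g z = 0) (hcont : ContinuousOn g K) :
    ∃ M, 0 ≤ M ∧ ∀ z, g z ≤ M := by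
  rcases K.eq_empty_or_nonempty with h | h
  · exact ⟨0, le_refl 0, fun z => le_of_eq (hsupp z (by simp [h]))⟩
  · obtain ⟨z0, hz0, hmax⟩ := hK.exists_isMaxOn h hcont
    refine ⟨g z0, hg0 z0, fun z => ?_⟩
    by_cases hz : z ∈ K
    · exact hmax hz
    · rw [hsupp z hz]; exact hg0 z0

lemma kernel_usc {K : Set E} (hK : IsClosed K) {g : E → ℝ}
    (hg0 : ∀ z, 0 ≤ g z) (hsupp : ∀ z ∉ K, g z = 0) (hcont : ContinuousOn g K) :
    UpperSemicontinuous g := by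
  intro z c hc
  by_cases hz : z ∈ K
  · have h1 : ∀ᶠ w in 𝓝[K] z, g w < c := (hcont z hz).eventually (eventually_lt_nhds hc)
    rw [eventually_nhdsWithin_iff] at h1
    filter_upwards [h1] with w hw
    by_cases hwK : w ∈ K
    · exact hw hwK
    · rw [hsupp w hwK]; exact lt_of_le_of_lt (hg0 z) hc
  · have hopen : ∀ᶠ w in 𝓝 z, w ∉ K := hK.isOpen_compl.mem_nhds hz
    filter_upwards [hopen] with w hw
    rw [hsupp w hw]
    exact lt_of_le_of_lt (hg0 z) hc

end auxlem

/-- the function `h(x) = sup_{y ∈ ℝ^d} f_x(y)` is continuous at every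
point `x ∈ (ℝ^d)^{k−1}` for which `K(x)` has nonempty interior. Here `k = m + 1 ≥ 2`. -/
theorem stmt6 (d m : ℕ) (hd : 1 ≤ d) (hm : 1 ≤ m)
    (g : Fin (m + 1) → EuclideanSpace ℝ (Fin d) → ℝ)
    (K : Fin (m + 1) → Set (EuclideanSpace ℝ (Fin d)))
    (hKne : ∀ i, (K i).Nonempty)
    (hKcpt : ∀ i, IsCompact (K i))
    (hKconv : ∀ i, Convex ℝ (K i))
    (hg0 : ∀ i z, 0 ≤ g i z)
    (hgsupp : ∀ i, ∀ z ∉ K i, g i z = 0)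
    (hgconc : ∀ i, ConcaveOn ℝ (K i) (g i))
    (hgcont : ∀ i, ContinuousOn (g i) (K i))
    (xk : EuclideanSpace ℝ (Fin d))
    (x : Fin m → EuclideanSpace ℝ (Fin d))
    (hx : (interior (Kx d m K xk x)).Nonempty) :
    ContinuousAt (fun v : Fin m → EuclideanSpace ℝ (Fin d) =>
      ⨆ y : EuclideanSpace ℝ (Fin d), fval d m g xk v y) x := by
  classical
  choose M hM0 hMle using fun j => kernel_bdd (hKcpt j) (hg0 j) (hgsupp j) (hgcont j)
  set Mtot : ℝ := ∑ j : Fin (m + 1), M j with hMtotdef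
  have hMtot0 : 0 ≤ Mtot := Finset.sum_nonneg fun j _ => hM0 j
  have husc : ∀ j, UpperSemicontinuous (g j) := fun j =>
    kernel_usc (hKcpt j).isClosed (hg0 j) (hgsupp j) (hgcont j)
  have hfle : ∀ v y, fval d m g xk v y ≤ Mtot := by
    intro v y
    rw [hMtotdef, Fin.sum_univ_castSucc]
    exact add_le_add (Finset.sum_le_sum fun i _ => hMle i.castSucc _) (hMle (Fin.last m) _)
  have hf0 : ∀ v y, 0 ≤ fval d m g xk v y :=
    fun v y => add_nonneg (Finset.sum_nonneg fun i _ => hg0 _ _) (hg0 _ _)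
  have hbdd : ∀ v, BddAbove (Set.range fun y => fval d m g xk v y) :=
    fun v => ⟨Mtot, by rintro _ ⟨y, rfl⟩; exact hfle v y⟩
  set h : (Fin m → EuclideanSpace ℝ (Fin d)) → ℝ := fun v => ⨆ y, fval d m g xk v y with hh
  have hge : ∀ v y, fval d m g xk v y ≤ h v := fun v y => le_ciSup (hbdd v) y
  have hle : ∀ v c, (∀ y, fval d m g xk v y ≤ c) → h v ≤ c := fun v c hc => ciSup_le hc
  have hpos : ∀ v, 0 ≤ h v := fun v => le_trans (hf0 v 0) (hge v 0)
  -- joint upper semicontinuity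
  set F : ((Fin m → EuclideanSpace ℝ (Fin d)) × EuclideanSpace ℝ (Fin d)) → ℝ := fun p => fval d m g xk p.1 p.2 with hFdef
  have hFusc : UpperSemicontinuous F := by
    have h1 : UpperSemicontinuous
        (fun p : (Fin m → EuclideanSpace ℝ (Fin d)) × EuclideanSpace ℝ (Fin d) => ∑ i : Fin m, g i.castSucc (p.2 - p.1 i)) := by
      apply upperSemicontinuous_sum
      intro i _
      have hcont : Continuous fun p : (Fin m → EuclideanSpace ℝ (Fin d)) × EuclideanSpace ℝ (Fin d) => p.2 - p.1 i :=
        continuous_snd.sub ((continuous_apply i).comp continuous_fst)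
      intro p c hc
      exact (hcont.tendsto p).eventually (husc i.castSucc _ c hc)
    have h2 : UpperSemicontinuous (fun p : (Fin m → EuclideanSpace ℝ (Fin d)) × EuclideanSpace ℝ (Fin d) => g (Fin.last m) (p.2 - xk)) := by
      have hcont : Continuous fun p : (Fin m → EuclideanSpace ℝ (Fin d)) × EuclideanSpace ℝ (Fin d) => p.2 - xk :=
        continuous_snd.sub continuous_const
      intro p c hc
      exact (hcont.tendsto p).eventually (husc (Fin.last m) _ c hc)
    exact h1.add h2
  -- uniform support radius
  obtain ⟨C, hC⟩ := (isCompact_iUnion fun j => hKcpt j : IsCompact (⋃ j, K j)).isBounded.exists_norm_le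
  have hCK : ∀ j z, z ∈ K j → ‖z‖ ≤ C := fun j z hz => hC z (mem_iUnion.mpr ⟨j, hz⟩)
  set R : ℝ := C + ‖x‖ + ‖xk‖ + 2 with hRdef
  have hsupp' : ∀ v : Fin m → EuclideanSpace ℝ (Fin d), dist v x < 1 → ∀ y : EuclideanSpace ℝ (Fin d), R < ‖y‖ → fval d m g xk v y = 0 := by
    intro v hv y hy
    have hterm : ∀ i : Fin m, g i.castSucc (y - v i) = 0 := by
      intro i
      apply hgsupp
      intro hmem
      have hn := hCK _ _ hmem
      have h2 : ‖v i - x i‖ ≤ dist v x := by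
        have := norm_le_pi_norm (v - x) i
        simpa [dist_eq_norm] using this
      have h3 : ‖x i‖ ≤ ‖x‖ := norm_le_pi_norm x i
      have h4 : ‖y‖ - ‖v i‖ ≤ ‖y - v i‖ := norm_sub_norm_le _ _
      have h5 : ‖v i‖ ≤ ‖v i - x i‖ + ‖x i‖ := by
        have := norm_add_le (v i - x i) (x i)
        simpa using this
      have h6 : 0 ≤ ‖xk‖ := norm_nonneg _
      rw [hRdef] at hy
      linarith
    have hlast : g (Fin.last m) (y - xk) = 0 := by
      apply hgsupp
      intro hmem
      have hn := hCK _ _ hmem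
      have h4 : ‖y‖ - ‖xk‖ ≤ ‖y - xk‖ := norm_sub_norm_le _ _
      have h6 : 0 ≤ ‖x‖ := norm_nonneg _
      rw [hRdef] at hy
      linarith
    unfold fval
    rw [hlast, Finset.sum_eq_zero fun i _ => hterm i, add_zero]
  rw [ContinuousAt, Metric.tendsto_nhds]
  intro ε hε
  have hupper : ∀ᶠ v in 𝓝 x, h v < h x + ε := by
    have hkey : ∀ y : EuclideanSpace ℝ (Fin d),
        ∃ (p : (Fin m → EuclideanSpace ℝ (Fin d)) → Prop) (q : EuclideanSpace ℝ (Fin d) → Prop),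
        (∀ᶠ v in 𝓝 x, p v) ∧ (∀ᶠ y' in 𝓝 y, q y') ∧
        ∀ v y', p v → q y' → F (v, y') < h x + ε / 2 := by
      intro y
      have h1 : F (x, y) < h x + ε / 2 := lt_of_le_of_lt (hge x y) (by linarith)
      have h2 := hFusc (x, y) _ h1
      rw [nhds_prod_eq, eventually_prod_iff] at h2
      obtain ⟨p, hp, q, hq, himp⟩ := h2
      exact ⟨p, q, hp, hq, fun v y' hv hy' => himp hv hy'⟩
    choose p q hp hq himp using hkey
    obtain ⟨t, ht⟩ := (isCompact_closedBall (0 : EuclideanSpace ℝ (Fin d)) R).elim_nhds_subcover'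
      (fun y _ => {y' | q y y'}) (fun y _ => hq y)
    have hPall : ∀ᶠ v in 𝓝 x, ∀ y ∈ t, p (↑y) v := t.eventually_all.mpr fun y _ => hp ↑y
    have hclose : ∀ᶠ v in 𝓝 x, dist v x < 1 :=
      eventually_of_mem (Metric.ball_mem_nhds x one_pos) fun v hv => mem_ball.mp hv
    filter_upwards [hPall, hclose] with v hvP hvd
    have hall : ∀ y : EuclideanSpace ℝ (Fin d), fval d m g xk v y ≤ h x + ε / 2 := by
      intro y
      by_cases hyB : y ∈ Metric.closedBall (0 : EuclideanSpace ℝ (Fin d)) R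
      · obtain ⟨y0, hy0⟩ := mem_iUnion.mp (ht hyB)
        simp only [mem_iUnion, mem_setOf_eq] at hy0
        obtain ⟨hy0t, hy0q⟩ := hy0
        exact le_of_lt (himp (↑y0) v y (hvP y0 hy0t) hy0q)
      · have hyR : R < ‖y‖ := by
          rw [Metric.mem_closedBall, dist_zero_right] at hyB
          exact lt_of_not_ge hyB
        rw [hsupp' v hvd y hyR]
        linarith [hpos x]
    have := hle v _ hall
    linarith
  have hlower : ∀ᶠ v in 𝓝 x, h x - ε < h v := by
    obtain ⟨y0, hy0⟩ := hx
    have hy0i : ∀ i : Fin m, y0 - x i ∈ interior (K i.castSucc) := by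
      intro i
      have h1 : interior (Kx d m K xk x) ⊆ interior ((· + x i) '' K i.castSucc) :=
        interior_mono fun z hz => Set.mem_iInter.mp hz.1 i
      have h2 := h1 hy0
      rw [show ((· + x i) '' K i.castSucc) = (Homeomorph.addRight (x i)) '' K i.castSucc from rfl,
        ← Homeomorph.image_interior] at h2
      obtain ⟨z, hz, hz2⟩ := h2
      have : z = y0 - x i := by
        have : z + x i = y0 := hz2
        rw [← this]; abel
      rwa [← this]
    have hy0k : y0 - xk ∈ K (Fin.last m) := by
      have h2 := (interior_subset hy0).2
      obtain ⟨z, hz, hz2⟩ := h2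
      have : z = y0 - xk := by
        have : z + xk = y0 := hz2
        rw [← this]; abel
      rwa [← this]
    obtain ⟨ys, hys⟩ := exists_lt_of_lt_ciSup
      (show h x - ε / 4 < h x by linarith : h x - ε / 4 < ⨆ y, fval d m g xk x y)
    set t0 : ℝ := min (1 / 2) (ε / (4 * (Mtot + 1))) with ht0def
    have ht0pos : 0 < t0 := lt_min (by norm_num) (by positivity)
    have ht0le : t0 ≤ 1 / 2 := min_le_left _ _
    have ht0M : t0 * Mtot ≤ ε / 4 := by
      have h1 : t0 ≤ ε / (4 * (Mtot + 1)) := min_le_right _ _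
      have h2 : t0 * Mtot ≤ (ε / (4 * (Mtot + 1))) * (Mtot + 1) := by
        have := mul_le_mul h1 (by linarith : Mtot ≤ Mtot + 1) hMtot0
          (by positivity : (0:ℝ) ≤ ε / (4 * (Mtot + 1)))
        linarith
      have h3 : (ε / (4 * (Mtot + 1))) * (Mtot + 1) = ε / 4 := by
        field_simp
      linarith
    set yt : EuclideanSpace ℝ (Fin d) := (1 - t0) • ys + t0 • y0 with hytdef
    have hcomb : ∀ (j : Fin (m + 1)) (s : EuclideanSpace ℝ (Fin d)), y0 - s ∈ K j →
        (1 - t0) * g j (ys - s) ≤ g j (yt - s) := by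
      intro j s hs
      have hyts : yt - s = (1 - t0) • (ys - s) + t0 • (y0 - s) := by
        rw [hytdef]
        module
      by_cases hys' : ys - s ∈ K j
      · have hcc := (hgconc j).2 hys' hs (by linarith : (0:ℝ) ≤ 1 - t0) (le_of_lt ht0pos)
          (by ring)
        rw [hyts]
        have h0 := hg0 j (y0 - s)
        have := mul_nonneg (le_of_lt ht0pos) h0
        dsimp only [smul_eq_mul] at hcc
        linarith
      · rw [hgsupp j _ hys', mul_zero]
        exact hg0 j _
    have hint : ∀ i : Fin m, ys - x i ∈ K i.castSucc →
        yt - x i ∈ interior (K i.castSucc) := by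
      intro i hi
      have hyts : yt - x i = t0 • (y0 - x i) + (1 - t0) • (ys - x i) := by
        rw [hytdef]
        module
      rw [hyts]
      exact (hKconv i.castSucc).combo_interior_self_mem_interior (hy0i i) hi ht0pos
        (by linarith) (by ring)
    set A : Finset (Fin m) := Finset.univ.filter (fun i => ys - x i ∈ K i.castSucc) with hAdef
    set φ : (Fin m → EuclideanSpace ℝ (Fin d)) → ℝ :=
      fun v => (∑ i ∈ A, g i.castSucc (yt - v i)) + g (Fin.last m) (yt - xk) with hφdef
    have hφcont : ContinuousAt φ x := by
      apply ContinuousAt.add _ continuousAt_const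
      apply tendsto_finset_sum
      intro i hi
      have hiA : ys - x i ∈ K i.castSucc := (Finset.mem_filter.mp hi).2
      have hKnhds : K i.castSucc ∈ 𝓝 (yt - x i) :=
        mem_interior_iff_mem_nhds.mp (hint i hiA)
      have hc1 : ContinuousAt (g i.castSucc) (yt - x i) := (hgcont i.castSucc).continuousAt hKnhds
      have hc2 : ContinuousAt (fun v : Fin m → EuclideanSpace ℝ (Fin d) => yt - v i) x :=
        (continuous_const.sub (continuous_apply i)).continuousAt
      exact Tendsto.comp hc1 hc2
    have hsum1 : (1 - t0) * fval d m g xk x ys ≤ φ x := by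
      have hzero : ∀ i ∈ Finset.univ, i ∉ A → g i.castSucc (ys - x i) = 0 := by
        intro i _ hiA
        apply hgsupp
        intro hmem
        exact hiA (Finset.mem_filter.mpr ⟨Finset.mem_univ i, hmem⟩)
      have hshrink : ∑ i : Fin m, g i.castSucc (ys - x i) = ∑ i ∈ A, g i.castSucc (ys - x i) :=
        (Finset.sum_subset A.subset_univ fun i hi hiA => hzero i hi hiA).symm
      rw [hφdef]
      unfold fval
      rw [mul_add, hshrink, Finset.mul_sum]
      apply add_le_add
      · exact Finset.sum_le_sum fun i _ => hcomb i.castSucc (x i) (interior_subset (hy0i i))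
      · exact hcomb (Fin.last m) xk hy0k
    have hφx : h x - ε / 2 < φ x := by
      have hMys : fval d m g xk x ys ≤ Mtot := hfle x ys
      have h1 : t0 * fval d m g xk x ys ≤ t0 * Mtot :=
        mul_le_mul_of_nonneg_left hMys (le_of_lt ht0pos)
      have hexp : (1 - t0) * fval d m g xk x ys
          = fval d m g xk x ys - t0 * fval d m g xk x ys := by ring
      clear_value t0 φ
      linarith [hsum1, hys, h1, ht0M]
    filter_upwards [hφcont.eventually (eventually_gt_nhds hφx)] with v hv
    have h1 : φ v ≤ fval d m g xk v yt := by
      rw [hφdef]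
      unfold fval
      exact add_le_add_left
        (Finset.sum_le_sum_of_subset_of_nonneg A.subset_univ fun i _ _ => hg0 _ _) _
    have h2 := hge v yt
    clear_value φ yt
    linarith [h2]
  filter_upwards [hupper, hlower] with v h1 h2
  rw [Real.dist_eq, abs_sub_lt_iff]
  constructor <;> linarith
end

section
/- Let (x_n)_{n∈ℕ} be a sequence in (ℝ^d)^{k−1} converging to some x ∈ (ℝ^d)^{k−1}, and let C ⊆ ℝ^d be a compact set with Z̃_u(x) ∩ C = ∅. Then there exists N ∈ ℕ such that Z̃_u(x_n) ∩ C = ∅ for all n ≥ N. -/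
/-- The excursion set `Z̃_u(x) = {y ∈ K(x) : f_x(y) ≥ u}`. -/
noncomputable def Zt (d m : ℕ) (g : Fin (m + 1) → EuclideanSpace ℝ (Fin d) → ℝ)
    (K : Fin (m + 1) → Set (EuclideanSpace ℝ (Fin d)))
    (xk : EuclideanSpace ℝ (Fin d)) (u : ℝ) (v : Fin m → EuclideanSpace ℝ (Fin d)) :
    Set (EuclideanSpace ℝ (Fin d)) :=
  {y ∈ Kx d m K xk v | u ≤ fval d m g xk v y}

lemma usc_aux {d : ℕ} {K : Set (EuclideanSpace ℝ (Fin d))} {g : EuclideanSpace ℝ (Fin d) → ℝ}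
    (hKc : IsClosed K) (h0 : ∀ z, 0 ≤ g z) (hs : ∀ z ∉ K, g z = 0)
    (hc : ContinuousOn g K) : UpperSemicontinuous g := by
  intro z y hy
  by_cases hz : z ∈ K
  · have h1 : ∀ᶠ w in nhdsWithin z K, g w < y := (hc z hz).eventually_lt_const hy
    rw [eventually_nhdsWithin_iff] at h1
    filter_upwards [h1] with w hw
    by_cases hwK : w ∈ K
    · exact hw hwK
    · rw [hs w hwK]; exact lt_of_le_of_lt (h0 z) hy
  · have hnb : Kᶜ ∈ nhds z := hKc.isOpen_compl.mem_nhds hz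
    filter_upwards [hnb] with w hw
    rw [hs w hw]
    have := hs z hz
    linarith [h0 z]


/-- if `x_n → x` in `(ℝ^d)^{k−1}` and `C` is compact with
`Z̃_u(x) ∩ C = ∅`, then `Z̃_u(x_n) ∩ C = ∅` for all large `n`. Here `k = m + 1 ≥ 2`,
each `g_i` is strictly concave on `K_i` and `g_i ≤ u/(k−1) = u/m` everywhere. -/
theorem stmt7 (d m : ℕ) (hd : 1 ≤ d) (hm : 1 ≤ m) (u : ℝ) (hu : 0 < u)
    (g : Fin (m + 1) → EuclideanSpace ℝ (Fin d) → ℝ)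
    (K : Fin (m + 1) → Set (EuclideanSpace ℝ (Fin d)))
    (hKne : ∀ i, (K i).Nonempty)
    (hKcpt : ∀ i, IsCompact (K i))
    (hKconv : ∀ i, Convex ℝ (K i))
    (hg0 : ∀ i z, 0 ≤ g i z)
    (hgsupp : ∀ i, ∀ z ∉ K i, g i z = 0)
    (hgconc : ∀ i, StrictConcaveOn ℝ (K i) (g i))
    (hgcont : ∀ i, ContinuousOn (g i) (K i))
    (hgle : ∀ i z, g i z ≤ u / m)
    (xk : EuclideanSpace ℝ (Fin d))
    (xs : ℕ → Fin m → EuclideanSpace ℝ (Fin d))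
    (x : Fin m → EuclideanSpace ℝ (Fin d))
    (hconv : Filter.Tendsto xs Filter.atTop (nhds x))
    (C : Set (EuclideanSpace ℝ (Fin d))) (hC : IsCompact C)
    (hdisj : Zt d m g K xk u x ∩ C = ∅) :
    ∃ N : ℕ, ∀ n ≥ N, Zt d m g K xk u (xs n) ∩ C = ∅ := by

  by_contra hcon
  push_neg at hcon
  have hfreq : ∃ᶠ n in Filter.atTop, (Zt d m g K xk u (xs n) ∩ C).Nonempty := by
    rw [Filter.frequently_atTop]
    intro N
    obtain ⟨n, hn, hne⟩ := hcon N
    exact ⟨n, hn, hne⟩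
  obtain ⟨φ, hφ, hφp⟩ := Filter.extraction_of_frequently_atTop hfreq
  choose y hy using hφp
  obtain ⟨a, haC, ψ, hψ, hya⟩ := hC.tendsto_subseq (fun n => (hy n).2)
  set σ : ℕ → ℕ := φ ∘ ψ with hσ
  set w : ℕ → EuclideanSpace ℝ (Fin d) := fun n => y (ψ n) with hwdef
  have hσt : Filter.Tendsto σ Filter.atTop Filter.atTop :=
    (hφ.comp hψ).tendsto_atTop
  have hv : Filter.Tendsto (fun n => xs (σ n)) Filter.atTop (nhds x) := hconv.comp hσt
  have hvi : ∀ i, Filter.Tendsto (fun n => xs (σ n) i) Filter.atTop (nhds (x i)) :=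
    fun i => tendsto_pi_nhds.mp hv i
  have hw : Filter.Tendsto w Filter.atTop (nhds a) := hya
  -- membership facts
  have hZ : ∀ n, w n ∈ Zt d m g K xk u (xs (σ n)) := fun n => (hy (ψ n)).1
  have hmem : ∀ n i, w n - xs (σ n) i ∈ K i.castSucc := by
    intro n i
    have h1 := (hZ n).1.1
    rw [Set.mem_iInter] at h1
    obtain ⟨z, hz, hze⟩ := h1 i
    have : z = w n - xs (σ n) i := eq_sub_of_add_eq hze
    exact this ▸ hz
  have hmeml : ∀ n, w n - xk ∈ K (Fin.last m) := by
    intro n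
    obtain ⟨z, hz, hze⟩ := (hZ n).1.2
    have : z = w n - xk := eq_sub_of_add_eq hze
    exact this ▸ hz
  have hfge : ∀ n, u ≤ fval d m g xk (xs (σ n)) (w n) := fun n => (hZ n).2
  -- limit memberships
  have hamem : ∀ i : Fin m, a - x i ∈ K i.castSucc := by
    intro i
    exact (hKcpt _).isClosed.mem_of_tendsto (hw.sub (hvi i))
      (Filter.Eventually.of_forall fun n => hmem n i)
  have haml : a - xk ∈ K (Fin.last m) :=
    (hKcpt _).isClosed.mem_of_tendsto (hw.sub tendsto_const_nhds)
      (Filter.Eventually.of_forall hmeml)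
  -- value inequality at the limit
  have husc : ∀ i : Fin (m+1), UpperSemicontinuous (g i) :=
    fun i => usc_aux (hKcpt i).isClosed (hg0 i) (hgsupp i) (hgcont i)
  have hF : u ≤ fval d m g xk x a := by
    by_contra hlt
    push_neg at hlt
    set F := fval d m g xk x a with hFdef
    set ε : ℝ := (u - F) / (m + 1) with hε
    have hεpos : 0 < ε := by
      apply div_pos (by linarith) (by positivity)
    have hev : ∀ i : Fin m, ∀ᶠ n in Filter.atTop,
        g i.castSucc (w n - xs (σ n) i) < g i.castSucc (a - x i) + ε := by
      intro i
      have h1 := husc i.castSucc (a - x i) (g i.castSucc (a - x i) + ε)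
        (lt_add_of_pos_right _ hεpos)
      exact (hw.sub (hvi i)).eventually h1
    have hevl : ∀ᶠ n in Filter.atTop,
        g (Fin.last m) (w n - xk) < g (Fin.last m) (a - xk) + ε := by
      have h1 := husc (Fin.last m) (a - xk) (g (Fin.last m) (a - xk) + ε)
        (lt_add_of_pos_right _ hεpos)
      exact (hw.sub tendsto_const_nhds).eventually h1
    obtain ⟨n, h1, h2⟩ := ((Filter.eventually_all.2 hev).and hevl).exists
    have hsum : ∑ i : Fin m, g i.castSucc (w n - xs (σ n) i) <
        ∑ i : Fin m, (g i.castSucc (a - x i) + ε) := by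
      apply Finset.sum_lt_sum_of_nonempty
      · exact Finset.univ_nonempty_iff.2 ⟨⟨0, hm⟩⟩
      · intro i _
        exact h1 i
    have hsum2 : ∑ i : Fin m, (g i.castSucc (a - x i) + ε)
        = (∑ i : Fin m, g i.castSucc (a - x i)) + m * ε := by
      rw [Finset.sum_add_distrib, Finset.sum_const, Finset.card_univ, Fintype.card_fin,
        nsmul_eq_mul]
    have hFval : F = (∑ i : Fin m, g i.castSucc (a - x i)) + g (Fin.last m) (a - xk) := rfl
    have hfn : fval d m g xk (xs (σ n)) (w n) =
        (∑ i : Fin m, g i.castSucc (w n - xs (σ n) i)) + g (Fin.last m) (w n - xk) := rfl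
    have hεeq : (m + 1 : ℝ) * ε = u - F := by
      rw [hε]
      field_simp
    have := hfge n
    rw [hfn] at this
    nlinarith [hsum, hsum2, h2]
  -- contradiction with disjointness
  have haZ : a ∈ Zt d m g K xk u x ∩ C := by
    refine ⟨⟨⟨?_, ?_⟩, hF⟩, haC⟩
    · rw [Set.mem_iInter]
      intro i
      exact ⟨a - x i, hamem i, by simp⟩
    · exact ⟨a - xk, haml, by simp⟩
  rw [hdisj] at haZ
  exact haZ
end

section
/- For every x = (x_1,…,x_{k−1}) ∈ (ℝ^d)^{k−1}, the set {y ∈ ℝ^d : y ∉ K(x) and f_x(y) = u} contains at most two points; if k ≥ 3, it contains at most one point. -/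
/-- for every `x ∈ (ℝ^d)^{k−1}`, the set
`{y : y ∉ K(x), f_x(y) = u}` has at most two points, and at most one point if
`k ≥ 3` (i.e. `m ≥ 2`). Here `k = m + 1 ≥ 2`, each `g_i` is strictly concave on
`K_i` and `g_i ≤ u/(k−1) = u/m` everywhere. -/
theorem stmt9 (d m : ℕ) (hd : 1 ≤ d) (hm : 1 ≤ m) (u : ℝ) (hu : 0 < u)
    (g : Fin (m + 1) → EuclideanSpace ℝ (Fin d) → ℝ)
    (K : Fin (m + 1) → Set (EuclideanSpace ℝ (Fin d)))
    (hKne : ∀ i, (K i).Nonempty)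
    (hKcpt : ∀ i, IsCompact (K i))
    (hKconv : ∀ i, Convex ℝ (K i))
    (hg0 : ∀ i z, 0 ≤ g i z)
    (hgsupp : ∀ i, ∀ z ∉ K i, g i z = 0)
    (hgconc : ∀ i, StrictConcaveOn ℝ (K i) (g i))
    (hgcont : ∀ i, ContinuousOn (g i) (K i))
    (hgle : ∀ i z, g i z ≤ u / m)
    (xk : EuclideanSpace ℝ (Fin d))
    (x : Fin m → EuclideanSpace ℝ (Fin d)) :
    ({y : EuclideanSpace ℝ (Fin d) |
        y ∉ Kx d m K xk x ∧ fval d m g xk x y = u}).encard ≤ 2 ∧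
    (2 ≤ m →
      ({y : EuclideanSpace ℝ (Fin d) |
          y ∉ Kx d m K xk x ∧ fval d m g xk x y = u}).encard ≤ 1) := by
  classical
  set p : Fin (m + 1) → EuclideanSpace ℝ (Fin d) := Fin.snoc x xk with hp
  set S : Set (EuclideanSpace ℝ (Fin d)) :=
    {y : EuclideanSpace ℝ (Fin d) | y ∉ Kx d m K xk x ∧ fval d m g xk x y = u} with hSdef
  have hmR : (0:ℝ) < (m:ℝ) := by exact_mod_cast hm
  have hum : (0:ℝ) < u / m := div_pos hu hmR
  have himg : ∀ (c : EuclideanSpace ℝ (Fin d)) (T : Set (EuclideanSpace ℝ (Fin d)))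
      (y : EuclideanSpace ℝ (Fin d)), y ∈ (· + c) '' T ↔ y - c ∈ T := by
    intro c T y
    constructor
    · rintro ⟨a, ha, rfl⟩; simpa using ha
    · intro h; exact ⟨y - c, h, sub_add_cancel y c⟩
  have hKxmem : ∀ y : EuclideanSpace ℝ (Fin d),
      y ∈ Kx d m K xk x ↔ ∀ j : Fin (m+1), y - p j ∈ K j := by
    intro y
    simp only [Kx, Set.mem_inter_iff, Set.mem_iInter, himg]
    constructor
    · rintro ⟨h1, h2⟩ j
      refine Fin.lastCases ?_ ?_ j
      · simpa [hp, Fin.snoc_last] using h2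
      · intro i; simpa [hp, Fin.snoc_castSucc] using h1 i
    · intro h
      exact ⟨fun i => by simpa [hp] using h i.castSucc, by simpa [hp] using h (Fin.last m)⟩
  have hsum : ∀ y : EuclideanSpace ℝ (Fin d),
      fval d m g xk x y = ∑ i : Fin (m+1), g i (y - p i) := by
    intro y
    rw [Fin.sum_univ_castSucc]
    simp [fval, hp]
  -- uniqueness of the maximizer
  have hmemK : ∀ (i : Fin (m+1)) (z : EuclideanSpace ℝ (Fin d)),
      g i z = u / m → z ∈ K i := by
    intro i z hz
    by_contra hzK
    rw [hgsupp i z hzK] at hz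
    exact absurd hz.symm (ne_of_gt hum)
  have huniq : ∀ (i : Fin (m+1)) (z1 z2 : EuclideanSpace ℝ (Fin d)),
      g i z1 = u / m → g i z2 = u / m → z1 = z2 := by
    intro i z1 z2 h1 h2
    by_contra hne
    have hlt := (hgconc i).2 (hmemK i z1 h1) (hmemK i z2 h2) hne (by norm_num : (0:ℝ) < 1/2)
      (by norm_num : (0:ℝ) < 1/2) (by norm_num)
    rw [h1, h2] at hlt
    have := hgle i ((1/2 : ℝ) • z1 + (1/2 : ℝ) • z2)
    simp only [smul_eq_mul] at hlt
    linarith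
  -- forcing lemma
  have hforce : ∀ y : EuclideanSpace ℝ (Fin d), fval d m g xk x y = u →
      ∀ j : Fin (m+1), y - p j ∉ K j →
      ∀ i : Fin (m+1), i ≠ j → g i (y - p i) = u / m := by
    intro y hy j hj i hij
    have hj0 : g j (y - p j) = 0 := hgsupp j _ hj
    rw [hsum] at hy
    have hsplit : ∑ i ∈ Finset.univ.erase j, g i (y - p i) = u := by
      have h := Finset.add_sum_erase Finset.univ (fun i => g i (y - p i)) (Finset.mem_univ j)
      simp only [hj0, zero_add] at h
      rw [h, hy]
    have hconst : ∑ _i ∈ Finset.univ.erase j, (u / (m:ℝ)) = u := by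
      rw [Finset.sum_const, Finset.card_erase_of_mem (Finset.mem_univ j), Finset.card_univ,
        Fintype.card_fin, nsmul_eq_mul]
      field_simp
      simp
    have := (Finset.sum_eq_sum_iff_of_le
      (f := fun i : Fin (m+1) => g i (y - p i)) (g := fun _ => u / (m:ℝ))
      (s := Finset.univ.erase j) (fun i _ => hgle i (y - p i))).mp
      (by rw [hsplit, hconst])
    exact this i (Finset.mem_erase.mpr ⟨hij, Finset.mem_univ i⟩)
  -- key rigidity
  have haux : ∀ y ∈ S, ∀ y' ∈ S, ∀ j j' i : Fin (m+1), y - p j ∉ K j → y' - p j' ∉ K j' →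
      i ≠ j → i ≠ j' → y = y' := by
    intro y hy y' hy' j j' i hj hj' hij hij'
    have h1 := hforce y hy.2 j hj i hij
    have h2 := hforce y' hy'.2 j' hj' i hij'
    have := huniq i _ _ h1 h2
    exact sub_left_inj.mp this
  have hmiss : ∀ y ∈ S, ∃ j : Fin (m+1), y - p j ∉ K j := by
    intro y hy
    have h := hy.1
    rw [hKxmem] at h
    push_neg at h
    exact h
  -- same missed index implies equal
  have hsamej : ∀ y ∈ S, ∀ y' ∈ S, ∀ j : Fin (m+1),
      y - p j ∉ K j → y' - p j ∉ K j → y = y' := by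
    intro y hy y' hy' j hj hj'
    haveI : Nontrivial (Fin (m+1)) := Fin.nontrivial_iff_two_le.mpr (by omega)
    obtain ⟨i, hi⟩ := exists_ne j
    exact haux y hy y' hy' j j i hj hj' hi hi
  have hone : 2 ≤ m → S.encard ≤ 1 := by
    intro hm2
    rw [Set.encard_le_one_iff]
    intro y y' hy hy'
    obtain ⟨j, hj⟩ := hmiss y hy
    obtain ⟨j', hj'⟩ := hmiss y' hy'
    have hex : ∃ i : Fin (m+1), i ≠ j ∧ i ≠ j' := by
      have hcard : ({j, j'} : Finset (Fin (m+1))).card ≤ 2 :=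
        (Finset.card_insert_le j {j'}).trans (by simp)
      have hcompl : (({j, j'} : Finset (Fin (m+1)))ᶜ).Nonempty := by
        rw [← Finset.card_pos, Finset.card_compl, Fintype.card_fin]
        omega
      obtain ⟨i, hi⟩ := hcompl
      rw [Finset.mem_compl, Finset.mem_insert, Finset.mem_singleton] at hi
      push_neg at hi
      exact ⟨i, hi⟩
    obtain ⟨i, hi1, hi2⟩ := hex
    exact haux y hy y' hy' j j' i hj hj' hi1 hi2
  refine ⟨?_, hone⟩
  rcases Nat.lt_or_ge m 2 with hm2 | hm2
  · -- m = 1, so Fin (m+1) has exactly two elements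
    have hm1 : m = 1 := by omega
    by_cases hS : S = ∅
    · rw [hS]; simp
    · obtain ⟨a, ha⟩ := Set.nonempty_iff_ne_empty.mpr hS
      obtain ⟨ja, hja⟩ := hmiss a ha
      by_cases h2 : ∃ b ∈ S, b ≠ a
      · obtain ⟨b, hb, hba⟩ := h2
        obtain ⟨jb, hjb⟩ := hmiss b hb
        have hjab : ja ≠ jb := by
          intro h
          exact hba (hsamej b hb a ha ja (h ▸ hjb) hja)
        have hsub : S ⊆ {a, b} := by
          intro c hc
          obtain ⟨jc, hjc⟩ := hmiss c hc
          have hv : jc = ja ∨ jc = jb := by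
            have h1 := jc.isLt
            have h2' := ja.isLt
            have h3 := jb.isLt
            have h4 : ja.val ≠ jb.val := fun h => hjab (Fin.ext h)
            have hvv : jc.val = ja.val ∨ jc.val = jb.val := by omega
            rcases hvv with h | h
            · exact Or.inl (Fin.ext h)
            · exact Or.inr (Fin.ext h)
          rcases hv with h | h
          · exact Or.inl (hsamej c hc a ha ja (h ▸ hjc) hja)
          · exact Or.inr (hsamej c hc b hb jb (h ▸ hjc) hjb)
        calc S.encard ≤ ({a, b} : Set _).encard := Set.encard_mono hsub
          _ ≤ ({b} : Set _).encard + 1 := Set.encard_insert_le _ _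
          _ = 2 := by rw [Set.encard_singleton]; rfl
      · push_neg at h2
        have hsub : S ⊆ {a} := fun c hc => h2 c hc
        calc S.encard ≤ ({a} : Set _).encard := Set.encard_mono hsub
          _ ≤ 2 := by rw [Set.encard_singleton]; exact one_le_two
  · exact (hone hm2).trans one_le_two
end

section
/- Let k ≥ 2 be an integer, let K_1,…,K_k ⊆ ℝ^d be compact convex sets, each with nonempty interior, and fix x_k ∈ ℝ^d. Then the set {(x_1,…,x_{k−1}) ∈ (ℝ^d)^{k−1} : the interior of (⋂_{i=1}^{k−1}(K_i + x_i)) ∩ (K_k + x_k) is nonempty} is path-connected. -/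
/-- let `K_1, …, K_k ⊆ ℝ^d` (`k = m + 1 ≥ 2`) be compact convex sets
with nonempty interior and fix `x_k`. The set of `(x_1,…,x_{k−1}) ∈ (ℝ^d)^{k−1}`
such that `(⋂_{i=1}^{k−1}(K_i + x_i)) ∩ (K_k + x_k)` has nonempty interior is
path-connected. -/
theorem stmt10 (d m : ℕ) (hd : 1 ≤ d) (hm : 1 ≤ m)
    (K : Fin (m + 1) → Set (EuclideanSpace ℝ (Fin d)))
    (hKcpt : ∀ i, IsCompact (K i))
    (hKconv : ∀ i, Convex ℝ (K i))
    (hKint : ∀ i, (interior (K i)).Nonempty)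
    (xk : EuclideanSpace ℝ (Fin d)) :
    IsPathConnected {v : Fin m → EuclideanSpace ℝ (Fin d) |
      (interior ((⋂ i : Fin m, (· + v i) '' K i.castSucc) ∩
        ((· + xk) '' K (Fin.last m)))).Nonempty} := by
  have himg : ∀ (c : EuclideanSpace ℝ (Fin d)) (T : Set (EuclideanSpace ℝ (Fin d))),
      interior ((· + c) '' T) = (· + c) '' interior T :=
    fun c T => ((Homeomorph.addRight c).image_interior T).symm
  have hset : {v : Fin m → EuclideanSpace ℝ (Fin d) |
      (interior ((⋂ i : Fin m, (· + v i) '' K i.castSucc) ∩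
        ((· + xk) '' K (Fin.last m)))).Nonempty} =
      {v : Fin m → EuclideanSpace ℝ (Fin d) | ∃ p : EuclideanSpace ℝ (Fin d),
        (∀ i : Fin m, ∃ y ∈ interior (K i.castSucc), y + v i = p) ∧
        (∃ y ∈ interior (K (Fin.last m)), y + xk = p)} := by
    ext v
    simp only [Set.mem_setOf_eq, interior_inter, interior_iInter_of_finite, himg,
      Set.Nonempty, Set.mem_inter_iff, Set.mem_iInter, Set.mem_image]
  rw [hset]
  have hconv : Convex ℝ {v : Fin m → EuclideanSpace ℝ (Fin d) | ∃ p : EuclideanSpace ℝ (Fin d),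
      (∀ i : Fin m, ∃ y ∈ interior (K i.castSucc), y + v i = p) ∧
      (∃ y ∈ interior (K (Fin.last m)), y + xk = p)} := by
    rintro v ⟨p, hp1, yk, hyk, hykp⟩ w ⟨q, hq1, zk, hzk, hzkp⟩ a b ha hb hab
    refine ⟨a • p + b • q, fun i => ?_, ?_⟩
    · obtain ⟨y, hy, hyp⟩ := hp1 i
      obtain ⟨z, hz, hzq⟩ := hq1 i
      refine ⟨a • y + b • z, (hKconv i.castSucc).interior hy hz ha hb hab, ?_⟩
      simp only [Pi.add_apply, Pi.smul_apply, ← hyp, ← hzq, smul_add]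
      module
    · refine ⟨a • yk + b • zk, (hKconv (Fin.last m)).interior hyk hzk ha hb hab, ?_⟩
      rw [← hykp, ← hzkp]
      have h : (a • yk + b • zk) + (a + b) • xk = a • (yk + xk) + b • (zk + xk) := by module
      rw [hab, one_smul] at h
      exact h
  have hne : {v : Fin m → EuclideanSpace ℝ (Fin d) | ∃ p : EuclideanSpace ℝ (Fin d),
      (∀ i : Fin m, ∃ y ∈ interior (K i.castSucc), y + v i = p) ∧
      (∃ y ∈ interior (K (Fin.last m)), y + xk = p)}.Nonempty := by
    obtain ⟨yk, hyk⟩ := hKint (Fin.last m)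
    choose y hy using fun i : Fin m => hKint i.castSucc
    exact ⟨fun i => (yk + xk) - y i, yk + xk, fun i => ⟨y i, hy i, by show y i + ((yk + xk) - y i) = yk + xk; exact add_sub_cancel _ _⟩, yk, hyk, rfl⟩
  exact hconv.isPathConnected hne
end

section
/- For every real number p with 2^{−1/4} < p < 1, the series Σ_{i=1}^∞ 2^{i²} (1−p)^{2i} p^{2i(2i−1)} / (2^{2i} (2i−1)^{2i}) diverges to infinity; equivalently, Σ_{i=1}^∞ (2p⁴)^{i²} ((1−p)² / (4p²(2i−1)²))^i = ∞. -/
/-- for `2^{−1/4} < p < 1`, the series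
`Σ_{i=1}^∞ 2^{i²} (1−p)^{2i} p^{2i(2i−1)} / (2^{2i} (2i−1)^{2i})`
diverges to infinity. -/
theorem stmt13 (p : ℝ) (hp1 : (2 : ℝ) ^ (-(1 / 4 : ℝ)) < p) (hp2 : p < 1) :
    Filter.Tendsto (fun N : ℕ => ∑ i ∈ Finset.Icc 1 N,
        (2 : ℝ) ^ (i ^ 2) * (1 - p) ^ (2 * i) * p ^ (2 * i * (2 * i - 1)) /
          ((2 : ℝ) ^ (2 * i) * ((2 * i - 1 : ℕ) : ℝ) ^ (2 * i)))
      Filter.atTop Filter.atTop := by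
  have hp0 : 0 < p := lt_trans (by positivity) hp1
  have h1p : 0 < 1 - p := by linarith
  -- `2 p^4 > 1`
  have hr : 1 < 2 * p ^ 4 := by
    have h4 : ((2 : ℝ) ^ (-(1 / 4 : ℝ))) ^ (4 : ℕ) < p ^ (4 : ℕ) :=
      pow_lt_pow_left₀ hp1 (by positivity) (by norm_num)
    have hcalc : ((2 : ℝ) ^ (-(1 / 4 : ℝ))) ^ (4 : ℕ) = 1 / 2 := by
      rw [← Real.rpow_natCast ((2 : ℝ) ^ (-(1 / 4 : ℝ))) 4, ← Real.rpow_mul (by norm_num)]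
      norm_num
    rw [hcalc] at h4
    nlinarith
  set s : ℝ := Real.sqrt (2 * p ^ 4) with hsdef
  have hs2 : s ^ 2 = 2 * p ^ 4 := Real.sq_sqrt (by positivity)
  have hs1 : 1 < s := by
    nlinarith [Real.sqrt_nonneg (2 * p ^ 4)]
  have hs0 : 0 < s := lt_trans one_pos hs1
  set c : ℝ := ((1 - p) / (2 * p)) ^ 2 with hcdef
  have hc0 : 0 < c := by positivity
  have hcp : c * (2 ^ 2 * p ^ 2) = (1 - p) ^ 2 := by
    rw [hcdef, div_pow, div_mul_eq_mul_div, div_eq_iff (by positivity)]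
    ring
  -- the term
  set a : ℕ → ℝ := fun i =>
    (2 : ℝ) ^ (i ^ 2) * (1 - p) ^ (2 * i) * p ^ (2 * i * (2 * i - 1)) /
      ((2 : ℝ) ^ (2 * i) * ((2 * i - 1 : ℕ) : ℝ) ^ (2 * i)) with hadef
  have ha_nonneg : ∀ i : ℕ, 0 ≤ a i := by
    intro i
    apply div_nonneg
    · exact mul_nonneg (mul_nonneg (by positivity) (pow_nonneg h1p.le _)) (pow_nonneg hp0.le _)
    · positivity
  -- eventually (2i-1)^2 ≤ s^i
  have h_poly : ∀ᶠ i : ℕ in Filter.atTop, ((2 * i - 1 : ℕ) : ℝ) ^ 2 ≤ s ^ i := by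
    have hlim : Filter.Tendsto (fun n : ℕ => (n : ℝ) ^ 2 / s ^ n)
        Filter.atTop (nhds 0) := tendsto_pow_const_div_const_pow_of_one_lt 2 hs1
    filter_upwards [hlim.eventually_lt_const (by norm_num : (0:ℝ) < 1/4)] with n hn
    have hsn : 0 < s ^ n := pow_pos hs0 n
    have h4 : 4 * (n : ℝ) ^ 2 ≤ s ^ n := by
      rw [div_lt_iff₀ hsn] at hn
      nlinarith
    have hcast : ((2 * n - 1 : ℕ) : ℝ) ≤ 2 * (n : ℝ) := by
      have : (2 * n - 1 : ℕ) ≤ 2 * n := by omega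
      calc ((2 * n - 1 : ℕ) : ℝ) ≤ ((2 * n : ℕ) : ℝ) := Nat.cast_le.mpr this
        _ = 2 * (n : ℝ) := by push_cast; ring
    have hD0 : (0 : ℝ) ≤ ((2 * n - 1 : ℕ) : ℝ) := Nat.cast_nonneg _
    calc ((2 * n - 1 : ℕ) : ℝ) ^ 2 ≤ (2 * (n : ℝ)) ^ 2 := pow_le_pow_left₀ hD0 hcast 2
      _ = 4 * (n : ℝ) ^ 2 := by ring
      _ ≤ s ^ n := h4
  -- eventually 2 ≤ s^i * c
  have h_geo : ∀ᶠ i : ℕ in Filter.atTop, 2 ≤ s ^ i * c := by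
    have hlim : Filter.Tendsto (fun i : ℕ => s ^ i) Filter.atTop Filter.atTop :=
      tendsto_pow_atTop_atTop_of_one_lt hs1
    filter_upwards [hlim.eventually_ge_atTop (2 / c)] with i hi
    calc (2 : ℝ) = 2 / c * c := by field_simp
      _ ≤ s ^ i * c := mul_le_mul_of_nonneg_right hi hc0.le
  -- key term bound
  have key : ∀ i : ℕ, 1 ≤ i → ((2 * i - 1 : ℕ) : ℝ) ^ 2 ≤ s ^ i → 2 ≤ s ^ i * c →
      (2 : ℝ) ^ i ≤ a i := by
    intro i hi hD hsc
    set D : ℝ := ((2 * i - 1 : ℕ) : ℝ) with hDdef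
    have hDpos : 0 < D := by
      have h1 : 0 < 2 * i - 1 := by omega
      rw [hDdef]
      exact_mod_cast h1
    rw [hadef]
    simp only
    rw [le_div_iff₀ (by positivity)]
    have hp2i : (0 : ℝ) < p ^ (2 * i) := pow_pos hp0 _
    apply le_of_mul_le_mul_right _ hp2i
    have step1 : (2 : ℝ) ^ i * (D ^ 2) ^ i ≤ (s ^ i * c) ^ i * (s ^ i) ^ i :=
      mul_le_mul (pow_le_pow_left₀ (by norm_num) hsc i)
        (pow_le_pow_left₀ (by positivity) hD i) (by positivity) (by positivity)
    have step2 : (s ^ i * c) ^ i * (s ^ i) ^ i = (2 : ℝ) ^ (i ^ 2) * p ^ (4 * i ^ 2) * c ^ i := by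
      have : (s ^ i * c) ^ i * (s ^ i) ^ i = (s ^ 2) ^ (i ^ 2) * c ^ i := by
        rw [mul_pow, ← pow_mul, ← pow_mul, ← pow_mul]
        ring
      rw [this, hs2, mul_pow, ← pow_mul]
    have step3 : (2 : ℝ) ^ i * (2 : ℝ) ^ (2 * i) * D ^ (2 * i) * p ^ (2 * i)
        = ((2 : ℝ) ^ i * (D ^ 2) ^ i) * (2 ^ 2 * p ^ 2) ^ i := by
      rw [mul_pow, ← pow_mul, ← pow_mul, ← pow_mul]
      ring
    have step4 : ((2 : ℝ) ^ (i ^ 2) * p ^ (4 * i ^ 2) * c ^ i) * (2 ^ 2 * p ^ 2) ^ i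
        = (2 : ℝ) ^ (i ^ 2) * p ^ (4 * i ^ 2) * (1 - p) ^ (2 * i) := by
      rw [mul_assoc, ← mul_pow, hcp, ← pow_mul]
    have step5 : (2 : ℝ) ^ (i ^ 2) * p ^ (4 * i ^ 2) * (1 - p) ^ (2 * i)
        = (2 : ℝ) ^ (i ^ 2) * (1 - p) ^ (2 * i) * p ^ (2 * i * (2 * i - 1)) * p ^ (2 * i) := by
      obtain ⟨k, rfl⟩ : ∃ k, i = k + 1 := ⟨i - 1, by omega⟩
      have h21 : 2 * (k + 1) - 1 = 2 * k + 1 := by omega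
      rw [h21]
      ring
    calc (2 : ℝ) ^ i * ((2 : ℝ) ^ (2 * i) * D ^ (2 * i)) * p ^ (2 * i)
        = ((2 : ℝ) ^ i * (D ^ 2) ^ i) * (2 ^ 2 * p ^ 2) ^ i := by rw [← step3]; ring
      _ ≤ ((2 : ℝ) ^ (i ^ 2) * p ^ (4 * i ^ 2) * c ^ i) * (2 ^ 2 * p ^ 2) ^ i := by
          apply mul_le_mul_of_nonneg_right _ (by positivity)
          rw [← step2]; exact step1
      _ = (2 : ℝ) ^ (i ^ 2) * (1 - p) ^ (2 * i) * p ^ (2 * i * (2 * i - 1)) * p ^ (2 * i) := by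
          rw [step4, step5]
  -- eventually the partial sum dominates 2^N
  have h_event : ∀ᶠ N : ℕ in Filter.atTop,
      (2 : ℝ) ^ N ≤ ∑ i ∈ Finset.Icc 1 N, a i := by
    filter_upwards [h_poly, h_geo, Filter.eventually_ge_atTop 1] with N hD hsc hN1
    calc (2 : ℝ) ^ N ≤ a N := key N hN1 hD hsc
      _ ≤ ∑ i ∈ Finset.Icc 1 N, a i :=
        Finset.single_le_sum (fun i _ => ha_nonneg i) (Finset.mem_Icc.mpr ⟨hN1, le_refl N⟩)
  exact Filter.tendsto_atTop_mono' _ h_event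
    (tendsto_pow_atTop_atTop_of_one_lt (by norm_num : (1:ℝ) < 2))
end
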